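/- Let D and D' be triangulated categories with full triangulated subcategories C ⊆ D and C' ⊆ D'. Suppose F : D → D' and G : D' → D form an adjoint pair of exact functors (F left adjoint to G) such that F(C) ⊆ C' and G(C') ⊆ C. Then F and G induce functors F̄ : D/C → D'/C' and Ḡ : D'/C' → D/C between the Verdier quotients, and F̄ is left adjoint to Ḡ. -/

import Mathlib

open CategoryTheory CategoryTheory.Limits CategoryTheory.Pretriangulated

namespace CategoryTheory

noncomputable def LocalizerMorphism.localizedAdjunction {C₁ C₂ D₁ D₂ : Type*} [Category C₁]
    [Category C₂] [Category D₁] [Category D₂] {W₁ : MorphismProperty C₁}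
    {W₂ : MorphismProperty C₂} (Φ : LocalizerMorphism W₁ W₂) (Ψ : LocalizerMorphism W₂ W₁)
    (adj : Φ.functor ⊣ Ψ.functor) (L₁ : C₁ ⥤ D₁) [L₁.IsLocalization W₁]
    (L₂ : C₂ ⥤ D₂) [L₂.IsLocalization W₂] :
    Φ.localizedFunctor L₁ L₂ ⊣ Ψ.localizedFunctor L₂ L₁ :=
  adj.localization L₁ W₁ L₂ W₂ _ _

section

variable {C D : Type*} [Category C] [Category D]
  [HasZeroObject C] [HasZeroObject D] [Preadditive C] [Preadditive D]
  [HasShift C ℤ] [HasShift D ℤ]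
  [∀ n : ℤ, (shiftFunctor C n).Additive] [∀ n : ℤ, (shiftFunctor D n).Additive]
  [Pretriangulated C] [Pretriangulated D]
  (F : C ⥤ D) [F.CommShift ℤ] [F.IsTriangulated]
  {P : ObjectProperty C} {P' : ObjectProperty D}

lemma Functor.trW_le_inverseImage_trW (h : P ≤ P'.inverseImage F) :
    P.trW ≤ P'.trW.inverseImage F := by
  rintro X Y f ⟨Z, g, k, hT, hZ⟩
  exact ObjectProperty.trW.mk P' (F.map_distinguished _ hT) (h Z hZ)

def Functor.trWLocalizerMorphism (h : P ≤ P'.inverseImage F) :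
    LocalizerMorphism P.trW P'.trW where
  functor := F
  map := F.trW_le_inverseImage_trW h

end

end CategoryTheory

/-- **Induced adjunction on Verdier quotients.**
Let `D` and `D'` be (pre)triangulated categories with full triangulated
subcategories `S ⊆ D` and `S' ⊆ D'`.  Suppose `F : D ⥤ D'` and `G : D' ⥤ D`
are an adjoint pair of exact (triangulated) functors such that `F` sends `S`
into `S'` and `G` sends `S'` into `S`.  Then `F` and `G` induce functors
`F̄ : D/S ⥤ D'/S'` and `Ḡ : D'/S' ⥤ D/S` between the Verdier quotients
(compatible with the quotient functors), and `F̄` is left adjoint to `Ḡ`. -/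
theorem adjunction_descends_to_verdier_quotients
    {D : Type*} {D' : Type*} [Category D] [Category D']
    [HasZeroObject D] [HasZeroObject D'] [Preadditive D] [Preadditive D']
    [HasShift D ℤ] [HasShift D' ℤ]
    [∀ n : ℤ, (CategoryTheory.shiftFunctor D n).Additive]
    [∀ n : ℤ, (CategoryTheory.shiftFunctor D' n).Additive]
    [Pretriangulated D] [Pretriangulated D']
    (S : ObjectProperty D) (S' : ObjectProperty D') [S.IsTriangulated] [S'.IsTriangulated]
    (F : D ⥤ D') (G : D' ⥤ D)
    [F.CommShift ℤ] [G.CommShift ℤ] [F.IsTriangulated] [G.IsTriangulated]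
    (adj : F ⊣ G)
    (hF : ∀ X : D, S X → S' (F.obj X))
    (hG : ∀ Y : D', S' Y → S (G.obj Y)) :
    ∃ (Fbar : S.trW.Localization ⥤ S'.trW.Localization)
      (Gbar : S'.trW.Localization ⥤ S.trW.Localization),
      Nonempty (S.trW.Q ⋙ Fbar ≅ F ⋙ S'.trW.Q) ∧
      Nonempty (S'.trW.Q ⋙ Gbar ≅ G ⋙ S.trW.Q) ∧
      Nonempty (Fbar ⊣ Gbar) := by
  let Φ := F.trWLocalizerMorphism hF
  let Ψ := G.trWLocalizerMorphism hG
  exact ⟨Φ.localizedFunctor S.trW.Q S'.trW.Q, Ψ.localizedFunctor S'.trW.Q S.trW.Q,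
    ⟨(CatCommSq.iso Φ.functor _ _ _).symm⟩, ⟨(CatCommSq.iso Ψ.functor _ _ _).symm⟩,
    ⟨Φ.localizedAdjunction Ψ adj S.trW.Q S'.trW.Q⟩⟩
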